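/- Let Σ be a d×d real matrix, b₀ : ℝ^d → ℝ^d any map, and for f ∈ C²(ℝ^d) define 𝓛f(x) := (1/2)trace(ΣΣᵀ∇²f(x)) + b₀(x)·∇f(x). Suppose ψ ∈ C²(ℝ^d) and there exist constants κ̃₁, κ̃₂, R₀ > 0 such that 𝓛ψ(x) ≤ −κ̃₁|x|² for all |x| ≥ R₀ and |∇ψ(x)| ≤ κ̃₂(1+|x|) for all x ∈ ℝ^d. Then there exist a > 0, κ̃₃ > 0 and R₁ ≥ R₀ such that 𝓛(e^{aψ})(x) ≤ −κ̃₃|x|² e^{aψ(x)} for all |x| ≥ R₁. -/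

import Mathlib

/-!
Since `∇e^{aψ} = a e^{aψ} ∇ψ` and `∇²e^{aψ} = a e^{aψ} ∇²ψ + a² e^{aψ} ∇ψ ∇ψᵀ`, one has
`𝓛e^{aψ} = e^{aψ} (a 𝓛ψ + (a²/2) ∇ψᵀ ΣΣᵀ ∇ψ)`. The quadratic term grows at most like `|x|²` by the
gradient bound, so for `a` small it is absorbed by half of the drift term `-a κ₁ |x|²`.
-/

set_option autoImplicit false

open Matrix Set

noncomputable section

abbrev EucSp (d : ℕ) := EuclideanSpace ℝ (Fin d)

/-- First partial derivative `∂f/∂xᵢ`. -/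
noncomputable def pd1 {d : ℕ} (f : EucSp d → ℝ) (i : Fin d) (x : EucSp d) : ℝ :=
  fderiv ℝ f x (EuclideanSpace.single i 1)

/-- Second partial derivative `∂²f/∂xᵢ∂xⱼ`. -/
noncomputable def pd2 {d : ℕ} (f : EucSp d → ℝ) (i j : Fin d) (x : EucSp d) : ℝ :=
  fderiv ℝ (fun y => fderiv ℝ f y (EuclideanSpace.single j 1)) x (EuclideanSpace.single i 1)

/-- Generator `𝓛f(x) = (1/2)trace(ΣΣᵀ∇²f(x)) + b₀(x)·∇f(x)` with constant diffusion matrix. -/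
noncomputable def Lc {d : ℕ} (Sm : Matrix (Fin d) (Fin d) ℝ) (b₀ : EucSp d → EucSp d)
    (f : EucSp d → ℝ) (x : EucSp d) : ℝ :=
  (1/2) * ∑ i, ∑ j, (Sm * Smᵀ) i j * pd2 f i j x + ∑ i, b₀ x i * pd1 f i x

/-- The carré du champ `∇f(x)ᵀ ΣΣᵀ ∇f(x)` of `𝓛`. -/
def carreDuChamp {d : ℕ} (Sm : Matrix (Fin d) (Fin d) ℝ) (f : EucSp d → ℝ) (x : EucSp d) : ℝ :=
  ∑ i, ∑ j, (Sm * Smᵀ) i j * pd1 f i x * pd1 f j x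

theorem Matrix.sum_mul_mul_le_sum_abs_mul_sum_sq {ι : Type*} [Fintype ι] (A : Matrix ι ι ℝ)
    (v : ι → ℝ) :
    ∑ i, ∑ j, A i j * v i * v j ≤ (∑ i, ∑ j, |A i j|) * ∑ k, v k ^ 2 := by
  have hsq (i : ι) : v i ^ 2 ≤ ∑ k, v k ^ 2 :=
    Finset.single_le_sum (fun k _ => sq_nonneg (v k)) (Finset.mem_univ i)
  rw [Finset.sum_mul]
  refine Finset.sum_le_sum fun i _ => ?_
  rw [Finset.sum_mul]
  refine Finset.sum_le_sum fun j _ => ?_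
  have hvv : |v i * v j| ≤ ∑ k, v k ^ 2 := by
    rw [abs_le]
    constructor <;> nlinarith [hsq i, hsq j, sq_nonneg (v i - v j), sq_nonneg (v i + v j)]
  calc A i j * v i * v j ≤ |A i j| * |v i * v j| := by
        rw [mul_assoc, ← abs_mul]; exact le_abs_self _
    _ ≤ |A i j| * ∑ k, v k ^ 2 := mul_le_mul_of_nonneg_left hvv (abs_nonneg _)

section ExpTransform

variable {d : ℕ} {ψ : EucSp d → ℝ}

theorem hasFDerivAt_exp_const_mul {x : EucSp d} (hψ : DifferentiableAt ℝ ψ x) (a : ℝ) :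
    HasFDerivAt (fun y => Real.exp (a * ψ y)) (Real.exp (a * ψ x) • a • fderiv ℝ ψ x) x :=
  (hψ.hasFDerivAt.const_mul a).exp

theorem pd1_exp_const_mul {x : EucSp d} (hψ : DifferentiableAt ℝ ψ x) (a : ℝ) (i : Fin d) :
    pd1 (fun y => Real.exp (a * ψ y)) i x = a * Real.exp (a * ψ x) * pd1 ψ i x := by
  simp only [pd1, (hasFDerivAt_exp_const_mul hψ a).fderiv, _root_.smul_apply, smul_eq_mul]
  ring

theorem pd2_exp_const_mul (hψ : ContDiff ℝ 2 ψ) (a : ℝ) (i j : Fin d) (x : EucSp d) :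
    pd2 (fun y => Real.exp (a * ψ y)) i j x =
      a * Real.exp (a * ψ x) * pd2 ψ i j x
        + a ^ 2 * Real.exp (a * ψ x) * pd1 ψ i x * pd1 ψ j x := by
  have hdiff : Differentiable ℝ ψ := hψ.differentiable (by norm_num)
  have hpartial : Differentiable ℝ (fun y => fderiv ℝ ψ y (EuclideanSpace.single j 1)) :=
    ((hψ.fderiv_right le_rfl).clm_apply contDiff_const).differentiable one_ne_zero
  have hfirst : (fun y => fderiv ℝ (fun z => Real.exp (a * ψ z)) y (EuclideanSpace.single j 1))
      = fun y => Real.exp (a * ψ y) * (a * fderiv ℝ ψ y (EuclideanSpace.single j 1)) := by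
    funext y
    simp only [(hasFDerivAt_exp_const_mul (hdiff y) a).fderiv, _root_.smul_apply,
      smul_eq_mul]
  have hsecond : HasFDerivAt
      (fun y => Real.exp (a * ψ y) * (a * fderiv ℝ ψ y (EuclideanSpace.single j 1))) _ x :=
    (hasFDerivAt_exp_const_mul (hdiff x) a).mul
    ((hpartial x).hasFDerivAt.const_mul a)
  rw [pd2, hfirst, hsecond.fderiv]
  simp only [smul_smul, _root_.add_apply, _root_.smul_apply, smul_eq_mul, pd2, pd1]
  ring

theorem Lc_exp_const_mul (Sm : Matrix (Fin d) (Fin d) ℝ) (b₀ : EucSp d → EucSp d)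
    (hψ : ContDiff ℝ 2 ψ) (a : ℝ) (x : EucSp d) :
    Lc Sm b₀ (fun y => Real.exp (a * ψ y)) x =
      Real.exp (a * ψ x) * (a * Lc Sm b₀ ψ x + a ^ 2 / 2 * carreDuChamp Sm ψ x) := by
  have hψx := hψ.differentiable (by norm_num) x
  have hdiffusion (i j : Fin d) : (Sm * Smᵀ) i j * pd2 (fun y => Real.exp (a * ψ y)) i j x =
      a * Real.exp (a * ψ x) * ((Sm * Smᵀ) i j * pd2 ψ i j x)
        + a ^ 2 * Real.exp (a * ψ x) * ((Sm * Smᵀ) i j * pd1 ψ i x * pd1 ψ j x) := by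
    rw [pd2_exp_const_mul hψ]; ring
  have hdrift (i : Fin d) : b₀ x i * pd1 (fun y => Real.exp (a * ψ y)) i x =
      a * Real.exp (a * ψ x) * (b₀ x i * pd1 ψ i x) := by
    rw [pd1_exp_const_mul hψx]; ring
  simp only [Lc, carreDuChamp, hdiffusion, hdrift, Finset.sum_add_distrib, ← Finset.mul_sum]
  ring

theorem Lc_exp_const_mul_le (Sm : Matrix (Fin d) (Fin d) ℝ) (b₀ : EucSp d → EucSp d)
    (hψ : ContDiff ℝ 2 ψ) {a κ₁ B r : ℝ} {x : EucSp d} (ha : 0 < a) (haB : a * B ≤ κ₁)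
    (hr : 0 ≤ r) (hdrift : Lc Sm b₀ ψ x ≤ -κ₁ * r) (hΓ : carreDuChamp Sm ψ x ≤ B * r) :
    Lc Sm b₀ (fun y => Real.exp (a * ψ y)) x ≤ -(a * κ₁ / 2) * r * Real.exp (a * ψ x) := by
  rw [Lc_exp_const_mul Sm b₀ hψ a x, mul_comm _ (Real.exp _)]
  refine mul_le_mul_of_nonneg_left ?_ (Real.exp_pos _).le
  have hquad : a ^ 2 / 2 * carreDuChamp Sm ψ x ≤ a / 2 * κ₁ * r := by
    calc a ^ 2 / 2 * carreDuChamp Sm ψ x ≤ a ^ 2 / 2 * (B * r) := by gcongr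
      _ = a / 2 * (a * B) * r := by ring
      _ ≤ a / 2 * κ₁ * r := by gcongr
  nlinarith [mul_le_mul_of_nonneg_left hdrift ha.le]

end ExpTransform

theorem carreDuChamp_le_of_gradient_bound {d : ℕ} (Sm : Matrix (Fin d) (Fin d) ℝ)
    {ψ : EucSp d → ℝ} {κ₂ : ℝ} {x : EucSp d}
    (hgrad : Real.sqrt (∑ i, (pd1 ψ i x) ^ 2) ≤ κ₂ * (1 + ‖x‖)) (hx : 1 ≤ ‖x‖) :
    carreDuChamp Sm ψ x ≤ 4 * (∑ i, ∑ j, |(Sm * Smᵀ) i j|) * κ₂ ^ 2 * ‖x‖ ^ 2 := by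
  have hS : ∑ i, (pd1 ψ i x) ^ 2 ≤ κ₂ ^ 2 * (1 + ‖x‖) ^ 2 := by
    rw [← mul_pow]; exact (Real.sqrt_le_iff.mp hgrad).2
  calc carreDuChamp Sm ψ x
      ≤ (∑ i, ∑ j, |(Sm * Smᵀ) i j|) * ∑ i, (pd1 ψ i x) ^ 2 :=
        (Sm * Smᵀ).sum_mul_mul_le_sum_abs_mul_sum_sq (fun i => pd1 ψ i x)
    _ ≤ (∑ i, ∑ j, |(Sm * Smᵀ) i j|) * (κ₂ ^ 2 * (4 * ‖x‖ ^ 2)) := by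
        gcongr
        exact hS.trans (by gcongr; nlinarith)
    _ = _ := by ring

theorem stmt6_general (d : ℕ)
    (Sm : Matrix (Fin d) (Fin d) ℝ) (b₀ : EucSp d → EucSp d)
    (ψ : EucSp d → ℝ) (hψ : ContDiff ℝ 2 ψ)
    (κ₁ κ₂ R₀ : ℝ) (hκ₁ : 0 < κ₁)
    (hdrift : ∀ x : EucSp d, R₀ ≤ ‖x‖ → Lc Sm b₀ ψ x ≤ -κ₁ * ‖x‖ ^ 2)
    (hgrad : ∀ x : EucSp d, Real.sqrt (∑ i, (pd1 ψ i x) ^ 2) ≤ κ₂ * (1 + ‖x‖)) :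
    ∃ a : ℝ, 0 < a ∧ ∃ κ₃ : ℝ, 0 < κ₃ ∧ ∃ R₁ : ℝ, R₀ ≤ R₁ ∧
      ∀ x : EucSp d, R₁ ≤ ‖x‖ →
        Lc Sm b₀ (fun y => Real.exp (a * ψ y)) x ≤
          -κ₃ * ‖x‖ ^ 2 * Real.exp (a * ψ x) := by
  set B := 4 * (∑ i, ∑ j, |(Sm * Smᵀ) i j|) * κ₂ ^ 2
  have hB : 0 ≤ B := by positivity
  set a := κ₁ / (B + 1)
  have ha : 0 < a := by positivity
  have haB : a * B ≤ κ₁ := by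
    rw [div_mul_eq_mul_div, div_le_iff₀ (by positivity)]
    nlinarith
  refine ⟨a, ha, a * κ₁ / 2, by positivity, max R₀ 1, le_max_left _ _, fun x hx => ?_⟩
  exact Lc_exp_const_mul_le Sm b₀ hψ ha haB (sq_nonneg _)
    (hdrift x (le_of_max_le_left hx))
    (carreDuChamp_le_of_gradient_bound Sm (hgrad x) (le_of_max_le_right hx))

theorem stmt6 (d : ℕ) (hd : 1 ≤ d)
    (Sm : Matrix (Fin d) (Fin d) ℝ) (b₀ : EucSp d → EucSp d)
    (ψ : EucSp d → ℝ) (hψ : ContDiff ℝ 2 ψ)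
    (κ₁ κ₂ R₀ : ℝ) (hκ₁ : 0 < κ₁) (hκ₂ : 0 < κ₂) (hR₀ : 0 < R₀)
    (hdrift : ∀ x : EucSp d, R₀ ≤ ‖x‖ → Lc Sm b₀ ψ x ≤ -κ₁ * ‖x‖ ^ 2)
    (hgrad : ∀ x : EucSp d, Real.sqrt (∑ i, (pd1 ψ i x) ^ 2) ≤ κ₂ * (1 + ‖x‖)) :
    ∃ a : ℝ, 0 < a ∧ ∃ κ₃ : ℝ, 0 < κ₃ ∧ ∃ R₁ : ℝ, R₀ ≤ R₁ ∧
      ∀ x : EucSp d, R₁ ≤ ‖x‖ →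
        Lc Sm b₀ (fun y => Real.exp (a * ψ y)) x ≤
          -κ₃ * ‖x‖ ^ 2 * Real.exp (a * ψ x) :=
  stmt6_general d Sm b₀ ψ hψ κ₁ κ₂ R₀ hκ₁ hdrift hgrad
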